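/- arXiv:2303.03829 — 2 statements merged into one kernel-verified Lean document; each statement's English description precedes it below -/
import Mathlib

section
/- Dissensus 2.0 attack: Suppose every Byzantine user b ∈ V_B sends to user i the vector x_b = x_i − C / W_B, where C = Σ_{j∈V_R} W_{ij} Clip(x_j − x_i, τ_i) and W_B = Σ_{b∈V_B} W_{ib} > 0. If ‖C / W_B‖ ≤ τ_i, then the aggregated update satisfies SCClip_i(x_1, …, x_n; τ_i) = x_i; i.e., the honest neighbors' clipped contribution is exactly cancelled. -/
open Finset

/-- Norm clipping: `Clip z τ = min 1 (τ/‖z‖) • z` (with `Clip 0 τ = 0`).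
Note `Clip z τ = z` whenever `‖z‖ ≤ τ`. -/
noncomputable def Clip {d : ℕ} (z : EuclideanSpace ℝ (Fin d)) (τ : ℝ) :
    EuclideanSpace ℝ (Fin d) :=
  (min 1 (τ / ‖z‖)) • z

/-- Self-centered clipping aggregation of user `i` (own vector `xi`) over
the user set `V` with weights `W` and radius `τ`:
`SCClip_i(x₁,…,xₙ; τ) = ∑_{j∈V} W_{ij} (x_i + Clip(x_j − x_i, τ))`. -/
noncomputable def SCClip {ι : Type*} {d : ℕ} (V : Finset ι) (W : ι → ℝ)
    (xi : EuclideanSpace ℝ (Fin d)) (x : ι → EuclideanSpace ℝ (Fin d)) (τ : ℝ) :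
    EuclideanSpace ℝ (Fin d) :=
  ∑ j ∈ V, W j • (xi + Clip (x j - xi) τ)

lemma clip_of_norm_le {d : ℕ} {z : EuclideanSpace ℝ (Fin d)} {τ : ℝ}
    (h : ‖z‖ ≤ τ) : Clip z τ = z := by
  rcases eq_or_ne z 0 with rfl | hz
  · simp [Clip]
  · have hn : 0 < ‖z‖ := norm_pos_iff.mpr hz
    have : (1 : ℝ) ≤ τ / ‖z‖ := (one_le_div hn).mpr h
    simp [Clip, min_eq_left this]

/-- Dissensus 2.0 attack: Byzantine users cancel the clipped honest contribution. -/
theorem dissensus2_attack {ι : Type*} [DecidableEq ι] {d : ℕ} (V VR : Finset ι) (hVR : VR ⊆ V)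
    (W : ι → ℝ) (hW0 : ∀ j ∈ V, 0 ≤ W j) (hW1 : ∑ j ∈ V, W j = 1)
    (i : ι) (hi : i ∈ VR) (τ : ℝ) (hτ : 0 ≤ τ)
    (x : ι → EuclideanSpace ℝ (Fin d))
    (C : EuclideanSpace ℝ (Fin d)) (hC : C = ∑ j ∈ VR, W j • Clip (x j - x i) τ)
    (WB : ℝ) (hWB : WB = ∑ b ∈ V \ VR, W b) (hWBpos : 0 < WB)
    (hsend : ∀ b ∈ V \ VR, x b = x i - WB⁻¹ • C)
    (hnoclipB : ‖WB⁻¹ • C‖ ≤ τ) :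
    SCClip V W (x i) x τ = x i := by
  have hsplit : SCClip V W (x i) x τ
      = (∑ j ∈ V, W j) • x i + ∑ j ∈ V, W j • Clip (x j - x i) τ := by
    simp [SCClip, smul_add, Finset.sum_add_distrib, Finset.sum_smul]
  have hB : ∀ b ∈ V \ VR, W b • Clip (x b - x i) τ = W b • (-(WB⁻¹ • C)) := by
    intro b hb
    have hx : x b - x i = -(WB⁻¹ • C) := by rw [hsend b hb]; abel
    rw [hx, clip_of_norm_le (by simpa using hnoclipB)]
  have hsumB : ∑ b ∈ V \ VR, W b • Clip (x b - x i) τ = -C := by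
    rw [Finset.sum_congr rfl hB, ← Finset.sum_smul, ← hWB, smul_neg, smul_smul,
      mul_inv_cancel₀ hWBpos.ne', one_smul]
  have hsum : ∑ j ∈ V, W j • Clip (x j - x i) τ = C + -C := by
    rw [← Finset.sum_sdiff hVR, hsumB, hC, add_comm]
  rw [hsplit, hW1, hsum, one_smul]
  simp
end

section
/- Consensus attack: Suppose every Byzantine user b ∈ V_B sends to user i the vector x_b = x_i − Σ_{j∈V_R} W_{ij}(x_i − x_j) / W_B, where W_B = Σ_{b∈V_B} W_{ib} > 0. Writing S = Σ_{j∈V_R} W_{ij}(x_j − x_i), if ‖x_j − x_i‖ ≤ τ_i for every regular user j ∈ V_R and ‖S / W_B‖ ≤ τ_i (so that no clipping is active), then the aggregated update satisfies SCClip_i(x_1, …, x_n; τ_i) = x_i + 2S; i.e., user i's drift toward its honest neighbors is doubled. -/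
open Finset

lemma Clip_of_le {d : ℕ} (z : EuclideanSpace ℝ (Fin d)) (τ : ℝ) (h : ‖z‖ ≤ τ) :
    Clip z τ = z := by
  unfold Clip
  rcases eq_or_ne z 0 with hz | hz
  · simp [hz]
  · have hzpos : 0 < ‖z‖ := norm_pos_iff.mpr hz
    have : (1 : ℝ) ≤ τ / ‖z‖ := (one_le_div hzpos).mpr h
    rw [min_eq_left this, one_smul]

/-- Consensus attack: Byzantine users double user `i`'s drift toward its honest neighbors. -/
theorem consensus_attack {ι : Type*} [DecidableEq ι] {d : ℕ} (V VR : Finset ι) (hVR : VR ⊆ V)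
    (W : ι → ℝ) (hW0 : ∀ j ∈ V, 0 ≤ W j) (hW1 : ∑ j ∈ V, W j = 1)
    (i : ι) (hi : i ∈ VR) (τ : ℝ) (hτ : 0 ≤ τ)
    (x : ι → EuclideanSpace ℝ (Fin d))
    (S : EuclideanSpace ℝ (Fin d)) (hS : S = ∑ j ∈ VR, W j • (x j - x i))
    (WB : ℝ) (hWB : WB = ∑ b ∈ V \ VR, W b) (hWBpos : 0 < WB)
    (hsend : ∀ b ∈ V \ VR, x b = x i - WB⁻¹ • (∑ j ∈ VR, W j • (x i - x j)))
    (hnoclipR : ∀ j ∈ VR, ‖x j - x i‖ ≤ τ)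
    (hnoclipB : ‖WB⁻¹ • S‖ ≤ τ) :
    SCClip V W (x i) x τ = x i + (2 : ℝ) • S := by
  have hsplit : ∀ b ∈ V \ VR, x b - x i = WB⁻¹ • S := by
    intro b hb
    rw [hsend b hb, hS]
    have : (∑ j ∈ VR, W j • (x i - x j)) = -∑ j ∈ VR, W j • (x j - x i) := by
      rw [← Finset.sum_neg_distrib]
      congr 1; ext j; rw [← smul_neg, neg_sub]
    rw [this]
    simp [smul_neg]
  unfold SCClip
  rw [← Finset.sum_sdiff hVR]
  have h1 : ∑ j ∈ VR, W j • (x i + Clip (x j - x i) τ)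
      = (∑ j ∈ VR, W j) • x i + S := by
    have hc : ∀ j ∈ VR, W j • (x i + Clip (x j - x i) τ)
        = W j • x i + W j • (x j - x i) := fun j hj => by
      rw [Clip_of_le _ _ (hnoclipR j hj), smul_add]
    rw [Finset.sum_congr rfl hc, Finset.sum_add_distrib, ← Finset.sum_smul, hS]
  have h2 : ∑ b ∈ V \ VR, W b • (x i + Clip (x b - x i) τ)
      = WB • x i + S := by
    have : ∀ b ∈ V \ VR, W b • (x i + Clip (x b - x i) τ)
        = W b • x i + W b • WB⁻¹ • S := by
      intro b hb
      rw [hsplit b hb, Clip_of_le _ _ hnoclipB, smul_add]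
    rw [Finset.sum_congr rfl this, Finset.sum_add_distrib, ← Finset.sum_smul,
      ← Finset.sum_smul, ← hWB, smul_smul, mul_inv_cancel₀ hWBpos.ne', one_smul]
  rw [h2, h1]
  have hsum : (∑ j ∈ VR, W j) + WB = 1 := by
    rw [hWB, ← hW1, ← Finset.sum_sdiff hVR]; ring
  have hx : ((∑ j ∈ VR, W j)) • x i + WB • x i = x i := by
    rw [← add_smul, hsum, one_smul]
  conv_rhs => rw [← hx]
  rw [two_smul]; abel
end
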